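/- arXiv:1409.0399 — 3 statements merged into one kernel-verified Lean document; each statement's English description precedes it below -/
import Mathlib

section
/- For every sequence (jₙ)ₙ≥1 of polygonal knots in ℝ³ there exist a continuous map f : ℝ³ → ℝ³ and a polygonal knot k in ℝ³ that is iteratively injective with respect to f, such that for every n ≥ 1 the image f^{n−1}(k) is a knot that is ambient isotopic to jₙ. -/
open Set

/-- The ambient 3-space, `ℝ³`, modeled as `ℝ × ℝ × ℝ`. -/
abbrev E3 : Type := ℝ × ℝ × ℝ

/-- A knot in `ℝ³`: a subset homeomorphic to the circle. -/
def IsKnot (k : Set E3) : Prop := Nonempty (k ≃ₜ Circle)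

/-- A polygonal knot: a knot which is a union of finitely many straight line segments. -/
def IsPolygonalKnot (k : Set E3) : Prop :=
  IsKnot k ∧ ∃ S : Finset (E3 × E3), k = ⋃ p ∈ S, segment ℝ p.1 p.2

/-- Ambient isotopy of subsets of `ℝ³`. -/
def AmbientIsotopic (k₁ k₂ : Set E3) : Prop :=
  ∃ H : (Icc (0:ℝ) 1) × E3 → E3,
    Continuous H ∧
    (∀ t : Icc (0:ℝ) 1, IsHomeomorph fun x => H (t, x)) ∧
    (∀ x, H (⟨0, by simp⟩, x) = x) ∧
    (fun x => H (⟨1, by simp⟩, x)) '' k₁ = k₂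

/-- `A` is iteratively injective with respect to `g` if every iterate `gⁿ` is injective on `A`. -/
def IterativelyInjective (g : E3 → E3) (A : Set E3) : Prop :=
  ∀ n : ℕ, Set.InjOn (g^[n]) A

/-! Shrink and translate `j n` into the ball of radius `1/4` about `(n, 0, 0)`; call the result
`K n`. These compact sets are pairwise disjoint and form a locally finite family, so their union is
closed and homeomorphisms `K n ≃ K (n + 1)` (through the circle) glue to a continuous map on it,
which Tietze extends to all of `ℝ³`. Its `n`-th iterate maps `K 0` bijectively onto `K n`, and each
`K n` is ambient isotopic to `j n` through homotheties. -/

universe u v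

open Function Filter Metric Bornology

theorem Set.bijOn_of_equiv {α β : Type*} {f : α → β} {s : Set α} {t : Set β} (e : s ≃ t)
    (he : ∀ x : s, f x = e x) : BijOn f s t := by
  refine ⟨fun x hx => he ⟨x, hx⟩ ▸ (e _).2, fun x hx y hy hxy => ?_, fun y hy => ?_⟩
  · rw [he ⟨x, hx⟩, he ⟨y, hy⟩] at hxy
    exact congrArg Subtype.val (e.injective (Subtype.ext hxy))
  · exact ⟨e.symm ⟨y, hy⟩, (e.symm _).2, by rw [he, Equiv.apply_symm_apply]⟩

theorem Set.bijOn_iterate_of_bijOn_succ {α : Type*} {f : α → α} {K : ℕ → Set α}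
    (h : ∀ n, BijOn f (K n) (K (n + 1))) : ∀ n, BijOn f^[n] (K 0) (K n)
  | 0 => bijOn_id _
  | n + 1 => by
    rw [Function.iterate_succ']
    exact (h n).comp (bijOn_iterate_of_bijOn_succ h n)

theorem LocallyFinite.exists_continuousMap_restrict_eq {ι : Type*} {X : Type u} {Y : Type v}
    [TopologicalSpace X] [NormalSpace X] [TopologicalSpace Y] [TietzeExtension.{u, v} Y]
    {K : ι → Set X}
    (hK : LocallyFinite K) (hclosed : ∀ i, IsClosed (K i)) (hdisj : Pairwise (Disjoint on K))
    (g : ∀ i, C(K i, Y)) : ∃ F : C(X, Y), ∀ i, F.restrict (K i) = g i := by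
  set U := ⋃ i, K i
  have hmem (x : U) : ∃ i, x.1 ∈ K i := mem_iUnion.1 x.2
  let h : U → Y := fun x => g (hmem x).choose ⟨x, (hmem x).choose_spec⟩
  have h_eq (i : ι) (x : U) (hx : x.1 ∈ K i) : h x = g i ⟨x, hx⟩ := by
    obtain rfl : (hmem x).choose = i :=
      hdisj.eq (not_disjoint_iff.2 ⟨x, (hmem x).choose_spec, hx⟩)
    rfl
  have h_cont : Continuous h := by
    refine (hK.preimage_continuous continuous_subtype_val).continuous ?_
      (fun i => (hclosed i).preimage continuous_subtype_val) fun i => ?_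
    · rw [← preimage_iUnion, Subtype.coe_preimage_self]
    · rw [continuousOn_iff_continuous_domRestrict]
      have : (Subtype.val ⁻¹' K i).domRestrict h = fun x => g i ⟨x.1.1, x.2⟩ :=
        funext fun x => h_eq i x.1 x.2
      rw [this]
      fun_prop
  obtain ⟨F, hF⟩ := ContinuousMap.exists_restrict_eq (hK.isClosed_iUnion hclosed) ⟨h, h_cont⟩
  exact ⟨F, fun i => ContinuousMap.ext fun x =>
    (DFunLike.congr_fun hF ⟨x, mem_iUnion_of_mem i x.2⟩).trans (h_eq i _ x.2)⟩

theorem Bornology.IsBounded.exists_pos_image_smul_add_subset_closedBall {E : Type*}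
    [SeminormedAddCommGroup E] [NormedSpace ℝ E] {s : Set E} (hs : IsBounded s) {r : ℝ}
    (hr : 0 < r) (v : E) : ∃ c > (0 : ℝ), (fun x => v + c • x) '' s ⊆ closedBall v r := by
  obtain ⟨R, hR, hsR⟩ := hs.exists_pos_norm_le
  refine ⟨r / R, by positivity, ?_⟩
  rintro _ ⟨x, hx, rfl⟩
  rw [mem_closedBall, dist_self_add_left, norm_smul, Real.norm_of_nonneg (by positivity)]
  calc r / R * ‖x‖ ≤ r / R * R := by gcongr; exact hsR x hx
    _ = r := div_mul_cancel₀ r hR.ne'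

theorem locallyFinite_closedBall_natCast (r : ℝ) :
    LocallyFinite fun n : ℕ => closedBall (n : ℝ) r := by
  have hInt : LocallyFinite fun n : ℤ => Icc ((n : ℝ) - r) (n + r) :=
    locallyFinite_Icc_of_tendsto (tendsto_atTop_add_const_right _ _ tendsto_intCast_atTop_atTop)
      (tendsto_atBot_add_const_right _ _ (tendsto_intCast_atBot_iff.2 tendsto_id))
  simpa [Function.comp_def, Real.closedBall_eq_Icc] using hInt.comp_injective Nat.cast_injective

theorem pairwise_disjoint_closedBall_natCast {r : ℝ} (hr : r < 1 / 2) :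
    Pairwise (Disjoint on fun n : ℕ => closedBall (n : ℝ) r) := fun m n hmn =>
  closedBall_disjoint_closedBall <| by
    rw [Nat.dist_cast_real]
    linarith [Nat.pairwise_one_le_dist hmn]

noncomputable def smulAddEquiv {𝕜 V : Type*} [Field 𝕜] [AddCommGroup V] [Module 𝕜 V] (c : 𝕜)
    (hc : c ≠ 0) (v : V) : V ≃ᵃ[𝕜] V :=
  (LinearEquiv.smulOfNeZero 𝕜 V c hc).toAffineEquiv.trans (AffineEquiv.constVAdd 𝕜 V v)

theorem coe_smulAddEquiv {𝕜 V : Type*} [Field 𝕜] [AddCommGroup V] [Module 𝕜 V] (c : 𝕜)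
    (hc : c ≠ 0) (v : V) : ⇑(smulAddEquiv c hc v) = fun x => v + c • x :=
  rfl

theorem IsKnot.isCompact {k : Set E3} (hk : IsKnot k) : IsCompact k :=
  isCompact_iff_compactSpace.2 hk.some.symm.compactSpace

theorem IsKnot.image_homeomorph {k : Set E3} (hk : IsKnot k) (e : E3 ≃ₜ E3) : IsKnot (e '' k) :=
  ⟨(e.image k).symm.trans hk.some⟩

theorem IsKnot.image_affineEquiv {k : Set E3} (hk : IsKnot k) (A : E3 ≃ᵃ[ℝ] E3) :
    IsKnot (A '' k) :=
  hk.image_homeomorph A.toContinuousAffineEquiv.toHomeomorph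

theorem IsPolygonalKnot.image_affineEquiv {k : Set E3} (hk : IsPolygonalKnot k)
    (A : E3 ≃ᵃ[ℝ] E3) : IsPolygonalKnot (A '' k) := by
  obtain ⟨hknot, S, rfl⟩ := hk
  refine ⟨hknot.image_affineEquiv A, S.image (Prod.map A A), ?_⟩
  rw [image_iUnion₂, Finset.set_biUnion_finset_image]
  exact iUnion₂_congr fun p _ => image_segment ℝ (A : E3 →ᵃ[ℝ] E3) p.1 p.2

theorem ambientIsotopic_image_smulAddEquiv {c : ℝ} (hc : 0 < c) (v : E3) (s : Set E3) :
    AmbientIsotopic (smulAddEquiv c hc.ne' v '' s) s := by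
  -- straight-line isotopy from the identity to the inverse `x ↦ c⁻¹ • (x - v)`
  have ha (t : Icc (0 : ℝ) 1) : 0 < (1 - t) * 1 + t * c⁻¹ :=
    convex_Ioi 0 one_pos (inv_pos.2 hc) (sub_nonneg.2 t.2.2) t.2.1 (sub_add_cancel 1 _)
  refine ⟨fun p => -(p.1 * c⁻¹) • v + ((1 - p.1) * 1 + p.1 * c⁻¹) • p.2, by fun_prop,
    fun t => ?_, fun x => by simp, ?_⟩
  · exact (smulAddEquiv _ (ha t).ne' (-(t * c⁻¹) • v)).toContinuousAffineEquiv.toHomeomorph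
      |>.isHomeomorph
  · rw [← image_comp]
    convert image_id s using 2
    simp [coe_smulAddEquiv, smul_add, smul_smul, inv_mul_cancel₀ hc.ne']

/-- Theorem (infinite sequence): for every sequence of polygonal knots `(jₙ)` (indexed so that
`j n` is the `(n+1)`-st knot) there are a continuous map `f : ℝ³ → ℝ³` and a polygonal knot `k`,
iteratively injective with respect to `f`, with `fⁿ(k)` a knot ambient isotopic to `j n`
for every `n ≥ 0`. -/
theorem infinite_sequence_of_knots (j : ℕ → Set E3) (hj : ∀ n, IsPolygonalKnot (j n)) :
    ∃ (f : E3 → E3) (k : Set E3), Continuous f ∧ IsPolygonalKnot k ∧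
      IterativelyInjective f k ∧
      ∀ n : ℕ, IsKnot (f^[n] '' k) ∧ AmbientIsotopic (f^[n] '' k) (j n) := by
  choose c hc hK_ball using fun n : ℕ => (hj n).1.isCompact.isBounded
    |>.exists_pos_image_smul_add_subset_closedBall (r := 4⁻¹) (by norm_num) ((n : ℝ), (0 : ℝ × ℝ))
  set K : ℕ → Set E3 := fun n => smulAddEquiv (c n) (hc n).ne' ((n : ℝ), 0) '' j n
  have hK_knot (n : ℕ) : IsKnot (K n) := (hj n).1.image_affineEquiv _
  have hK_slab (n : ℕ) : K n ⊆ Prod.fst ⁻¹' closedBall (n : ℝ) 4⁻¹ :=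
    (hK_ball n).trans <|
      (closedBall_prod_same _ _ _).symm.subset.trans (prod_subset_preimage_fst _ _)
  have hK_lf : LocallyFinite K :=
    ((locallyFinite_closedBall_natCast _).preimage_continuous continuous_fst).subset hK_slab
  have hK_disj : Pairwise (Disjoint on K) := fun m n hmn =>
    ((pairwise_disjoint_closedBall_natCast (by norm_num) hmn).preimage _).mono
      (hK_slab m) (hK_slab n)
  let e (n : ℕ) : K n ≃ₜ K (n + 1) := (hK_knot n).some.trans (hK_knot (n + 1)).some.symm
  obtain ⟨F, hF⟩ := hK_lf.exists_continuousMap_restrict_eq (fun n => (hK_knot n).isCompact.isClosed)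
    hK_disj fun n => ⟨Subtype.val ∘ e n, by fun_prop⟩
  have hbij : ∀ n, BijOn F^[n] (K 0) (K n) := bijOn_iterate_of_bijOn_succ fun n =>
    bijOn_of_equiv (e n).toEquiv fun x => DFunLike.congr_fun (hF n) x
  refine ⟨F, K 0, F.continuous, (hj 0).image_affineEquiv _, fun n => (hbij n).injOn, fun n => ?_⟩
  rw [(hbij n).image_eq]
  exact ⟨hK_knot n, ambientIsotopic_image_smulAddEquiv (hc n) _ _⟩
end

section
/- Let k₁ and k₂ be polygonal knots in ℝ³ and let φ : k₁ → k₂ be a homeomorphism satisfying: (1) p(φ(x)) = p(x) for every x ∈ k₁; and (2) whenever x, y ∈ k₁ with x ≠ y and p(x) = p(y), one has (h(x) − h(y))·(h(φ(x)) − h(φ(y))) > 0. Then for every t ∈ [0,1] the map x ↦ (1−t)·x + t·φ(x) is injective on k₁, so that jₜ := {(1−t)·x + t·φ(x) : x ∈ k₁} is a knot in ℝ³; moreover j₀ = k₁ and j₁ = k₂. -/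
/-! The interpolation `x ↦ (1-t)·x + t·φ(x)` fixes the projection, so two points of `k₁` with
the same image lie over the same point of the plane; there their height differences before and
after `φ` have the same sign, so no convex combination of them can vanish. As `k₁` is compact,
the continuous injection is then a homeomorphism onto its image. -/

open Set

/-- The projection `p(x,y,z) = (x,y)`. -/
def projXY : E3 → ℝ × ℝ := fun p => (p.1, p.2.1)

/-- The height function `h(x,y,z) = z`. -/
def height : E3 → ℝ := fun p => p.2.2

lemma convex_combination_ne_zero_of_mul_pos {a b t : ℝ} (ht : t ∈ Icc (0 : ℝ) 1)
    (hab : 0 < a * b) : (1 - t) * a + t * b ≠ 0 := by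
  obtain ⟨ht₀, ht₁⟩ := ht
  intro h
  have hsum : (1 - t) * a ^ 2 + a * b + t * b ^ 2 = 0 := by linear_combination (a + b) * h
  linarith [mul_nonneg (sub_nonneg.2 ht₁) (sq_nonneg a), mul_nonneg ht₀ (sq_nonneg b)]

lemma projXY_convex_combination {x y : E3} (t : ℝ) (hxy : projXY y = projXY x) :
    projXY ((1 - t) • x + t • y) = projXY x := by
  simp only [projXY, Prod.mk.injEq] at hxy ⊢
  simp only [Prod.fst_add, Prod.snd_add, Prod.smul_fst, Prod.smul_snd, smul_eq_mul, hxy]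
  constructor <;> ring

lemma height_convex_combination (x y : E3) (t : ℝ) :
    height ((1 - t) • x + t • y) = (1 - t) * height x + t * height y := rfl

lemma injOn_convex_combination_of_height_order {s : Set E3} {φ : E3 → E3} {t : ℝ}
    (ht : t ∈ Icc (0 : ℝ) 1) (hproj : ∀ x ∈ s, projXY (φ x) = projXY x)
    (hheight : ∀ x ∈ s, ∀ y ∈ s, x ≠ y → projXY x = projXY y →
      0 < (height x - height y) * (height (φ x) - height (φ y))) :
    InjOn (fun x : E3 => (1 - t) • x + t • φ x) s := by
  intro x hx y hy hxy
  by_contra hne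
  have hxy_proj : projXY x = projXY y := by
    rw [← projXY_convex_combination t (hproj x hx), ← projXY_convex_combination t (hproj y hy)]
    exact congrArg projXY hxy
  apply convex_combination_ne_zero_of_mul_pos ht (hheight x hx y hy hne hxy_proj)
  have := congrArg height hxy
  simp only [height_convex_combination] at this
  linear_combination this

lemma IsKnot.image_of_injOn {k : Set E3} (hk : IsKnot k) {f : E3 → E3}
    (hf : ContinuousOn f k) (hinj : InjOn f k) : IsKnot (f '' k) := by
  obtain ⟨e⟩ := hk
  have : CompactSpace k := e.symm.compactSpace
  have hcont : Continuous (Equiv.Set.imageOfInjOn f k hinj) :=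
    hf.domRestrict.subtype_mk _
  exact ⟨(hcont.homeoOfEquivCompactToT2).symm.trans e⟩

theorem straight_line_isotopy_general (k₁ k₂ : Set E3)
    (h₁ : IsPolygonalKnot k₁)
    (φ : E3 → E3)
    (hφbij : Set.BijOn φ k₁ k₂)
    (hφcont : ContinuousOn φ k₁)
    (hproj : ∀ x ∈ k₁, projXY (φ x) = projXY x)
    (hheight : ∀ x ∈ k₁, ∀ y ∈ k₁, x ≠ y → projXY x = projXY y →
      0 < (height x - height y) * (height (φ x) - height (φ y))) :
    (∀ t ∈ Icc (0:ℝ) 1,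
      Set.InjOn (fun x : E3 => (1 - t) • x + t • φ x) k₁ ∧
      IsKnot ((fun x : E3 => (1 - t) • x + t • φ x) '' k₁)) ∧
    (fun x : E3 => (1 - (0:ℝ)) • x + (0:ℝ) • φ x) '' k₁ = k₁ ∧
    (fun x : E3 => (1 - (1:ℝ)) • x + (1:ℝ) • φ x) '' k₁ = k₂ := by
  refine ⟨fun t ht => ?_, by simp, by simpa using hφbij.image_eq⟩
  have hinj := injOn_convex_combination_of_height_order ht hproj hheight
  exact ⟨hinj, h₁.1.image_of_injOn (by fun_prop) hinj⟩

/-- Proposition: under the hypotheses of the same-diagram proposition, the straight-line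
interpolation `x ↦ (1-t)·x + t·φ(x)` is injective on `k₁` for every `t ∈ [0,1]`, its image
`jₜ` is a knot, and `j₀ = k₁`, `j₁ = k₂`. -/
theorem straight_line_isotopy (k₁ k₂ : Set E3)
    (h₁ : IsPolygonalKnot k₁) (h₂ : IsPolygonalKnot k₂)
    (φ : E3 → E3)
    (hφbij : Set.BijOn φ k₁ k₂)
    (hφcont : ContinuousOn φ k₁)
    (hproj : ∀ x ∈ k₁, projXY (φ x) = projXY x)
    (hheight : ∀ x ∈ k₁, ∀ y ∈ k₁, x ≠ y → projXY x = projXY y →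
      0 < (height x - height y) * (height (φ x) - height (φ y))) :
    (∀ t ∈ Icc (0:ℝ) 1,
      Set.InjOn (fun x : E3 => (1 - t) • x + t • φ x) k₁ ∧
      IsKnot ((fun x : E3 => (1 - t) • x + t • φ x) '' k₁)) ∧
    (fun x : E3 => (1 - (0:ℝ)) • x + (0:ℝ) • φ x) '' k₁ = k₁ ∧
    (fun x : E3 => (1 - (1:ℝ)) • x + (1:ℝ) • φ x) '' k₁ = k₂ :=
  straight_line_isotopy_general k₁ k₂ h₁ φ hφbij hφcont hproj hheight
end

section
/- For every real number μ > 2, the tent map t_μ : ℝ → ℝ is switching; that is, for every map ψ : {1, 2, 3, …} → {−1, 1} there exist real numbers x and y such that for every n ≥ 1 one has t_μ^{n−1}(x) ≠ t_μ^{n−1}(y) and (t_μ^{n−1}(x) − t_μ^{n−1}(y))/|t_μ^{n−1}(x) − t_μ^{n−1}(y)| = ψ(n). -/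
/-!
For `μ > 2` the tent map sends each of the disjoint intervals `[0, 1/μ]` and `[1 - 1/μ, 1]` onto a
set containing `[0, 1]`. Hence every finite itinerary through these two intervals is followed by
some orbit, and Cantor's intersection theorem upgrades this to infinite itineraries. Two points
whose itineraries are complementary, with the upper interval wherever `ψ n = 1`, have the
prescribed signs of differences along their orbits.
-/

open Set

/-- The tent map `t_μ`: `t_μ(z) = μz` for `z ≤ 1/2` and `t_μ(z) = μ(1-z)` for `z ≥ 1/2`. -/
noncomputable def tentMap (μ : ℝ) : ℝ → ℝ := fun z =>
  if z ≤ 1 / 2 then μ * z else μ * (1 - z)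

/-- A continuous map `f : ℝ → ℝ` is switching if for every sign sequence `ψ : ℕ → {-1, 1}`
(indexed so that `ψ n` prescribes the sign at the `n`-th iterate, `n ≥ 0`) there are reals
`x, y` with `fⁿ(x) ≠ fⁿ(y)` and `(fⁿ(x) - fⁿ(y)) / |fⁿ(x) - fⁿ(y)| = ψ n` for every `n`. -/
def Switching (f : ℝ → ℝ) : Prop :=
  Continuous f ∧
  ∀ ψ : ℕ → ℝ, (∀ n, ψ n = -1 ∨ ψ n = 1) →
    ∃ x y : ℝ, ∀ n : ℕ,
      f^[n] x ≠ f^[n] y ∧ (f^[n] x - f^[n] y) / |f^[n] x - f^[n] y| = ψ n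

theorem exists_forall_le_iterate_mem_of_subset_image {X ι : Type*} {f : X → X}
    {I : ι → Set X} (hI : ∀ i j, I j ⊆ f '' I i) (hne : ∀ i, (I i).Nonempty) (a : ℕ → ι) (N : ℕ) :
    ∃ x, ∀ n ≤ N, f^[n] x ∈ I (a n) := by
  induction N generalizing a with
  | zero =>
    obtain ⟨x, hx⟩ := hne (a 0)
    exact ⟨x, fun n hn => by rwa [Nat.le_zero.1 hn]⟩
  | succ N ih =>
    obtain ⟨y, hy⟩ := ih (a ∘ Nat.succ)
    obtain ⟨x, hx, rfl⟩ := hI (a 0) (a 1) (hy 0 N.zero_le)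
    refine ⟨x, fun n hn => ?_⟩
    cases n with
    | zero => exact hx
    | succ n => simpa using hy n (by omega)

theorem exists_forall_iterate_mem_of_subset_image {X ι : Type*} [TopologicalSpace X] [T2Space X]
    {f : X → X} (hf : Continuous f) {I : ι → Set X} (hI : ∀ i j, I j ⊆ f '' I i)
    (hcpt : ∀ i, IsCompact (I i)) (hne : ∀ i, (I i).Nonempty) (a : ℕ → ι) :
    ∃ x, ∀ n, f^[n] x ∈ I (a n) := by
  let t : ℕ → Set X := fun N => ⋂ n ≤ N, f^[n] ⁻¹' I (a n)
  have htcl : ∀ N, IsClosed (t N) := fun N =>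
    isClosed_biInter fun n _ => (hcpt (a n)).isClosed.preimage (hf.iterate n)
  have ht : (⋂ N, t N).Nonempty := by
    refine IsCompact.nonempty_iInter_of_sequence_nonempty_isCompact_isClosed t
      (fun N => biInter_subset_biInter_left fun n hn => le_trans hn N.le_succ)
      (fun N => ?_) ((hcpt (a 0)).of_isClosed_subset (htcl 0) ?_) htcl
    · simpa [t, Set.Nonempty] using exists_forall_le_iterate_mem_of_subset_image hI hne a N
    · exact fun x hx => by simpa [t] using hx
  obtain ⟨x, hx⟩ := ht
  simp only [t, mem_iInter, mem_preimage] at hx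
  exact ⟨x, fun n => hx n n le_rfl⟩

section

variable {α : Type*} [Field α] [LinearOrder α] [IsStrictOrderedRing α] {x y : α}

theorem sub_div_abs_sub_of_lt (h : y < x) : (x - y) / |x - y| = 1 := by
  rw [abs_of_pos (sub_pos.2 h), div_self (sub_pos.2 h).ne']

theorem sub_div_abs_sub_of_gt (h : x < y) : (x - y) / |x - y| = -1 := by
  rw [abs_of_neg (sub_neg.2 h), div_neg, div_self (sub_neg.2 h).ne]

end

theorem continuous_tentMap (μ : ℝ) : Continuous (tentMap μ) :=
  Continuous.if_le (by fun_prop) (by fun_prop) continuous_id continuous_const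
    fun x hx => by rw [hx]; ring

def tentBranch (μ : ℝ) : Bool → Set ℝ
  | true => Icc (1 - μ⁻¹) 1
  | false => Icc 0 μ⁻¹

theorem isCompact_tentBranch (μ : ℝ) (b : Bool) : IsCompact (tentBranch μ b) := by
  cases b <;> exact isCompact_Icc

section

variable {μ : ℝ}

theorem tentBranch_subset_Icc (hμ : 1 ≤ μ) (b : Bool) : tentBranch μ b ⊆ Icc 0 1 := by
  have : μ⁻¹ ≤ 1 := inv_le_one_of_one_le₀ hμ
  have : 0 ≤ μ⁻¹ := by positivity
  cases b <;> exact Icc_subset_Icc (by linarith) (by linarith)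

theorem tentBranch_nonempty (hμ : 0 ≤ μ) (b : Bool) : (tentBranch μ b).Nonempty := by
  have : 0 ≤ μ⁻¹ := inv_nonneg.2 hμ
  cases b <;> exact nonempty_Icc.2 (by linarith)

theorem Icc_subset_tentMap_image_tentBranch (hμ : 2 < μ) (b : Bool) :
    Icc 0 1 ⊆ tentMap μ '' tentBranch μ b := by
  intro z ⟨hz0, hz1⟩
  have hμ0 : 0 < μ := by linarith
  have hw : μ⁻¹ * z ≤ μ⁻¹ := mul_le_of_le_one_right (by positivity) hz1
  have hμ2 : μ⁻¹ < 1 / 2 := by rw [inv_lt_comm₀ hμ0 (by norm_num)]; linarith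
  have hw0 : 0 ≤ μ⁻¹ * z := by positivity
  cases b
  · refine ⟨μ⁻¹ * z, ⟨hw0, hw⟩, ?_⟩
    rw [tentMap, if_pos (by linarith), mul_inv_cancel_left₀ hμ0.ne']
  · refine ⟨1 - μ⁻¹ * z, ⟨by linarith, by linarith⟩, ?_⟩
    rw [tentMap, if_neg (by linarith), sub_sub_cancel, mul_inv_cancel_left₀ hμ0.ne']

theorem lt_of_mem_tentBranch (hμ : 2 < μ) {x y : ℝ} (hx : x ∈ tentBranch μ false)
    (hy : y ∈ tentBranch μ true) : x < y := by
  have : μ⁻¹ < 1 / 2 := by rw [inv_lt_comm₀ (by linarith) (by norm_num)]; linarith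
  linarith [hx.2, hy.1]

end

/-- Proposition: for every `μ > 2` the tent map `t_μ` is switching. -/
theorem tentMap_switching (μ : ℝ) (hμ : 2 < μ) : Switching (tentMap μ) := by
  refine ⟨continuous_tentMap μ, fun ψ hψ => ?_⟩
  have hI (b c : Bool) : tentBranch μ c ⊆ tentMap μ '' tentBranch μ b :=
    (tentBranch_subset_Icc (by linarith) c).trans (Icc_subset_tentMap_image_tentBranch hμ b)
  have hitin := exists_forall_iterate_mem_of_subset_image (continuous_tentMap μ) hI
    (isCompact_tentBranch μ) (tentBranch_nonempty (by linarith))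
  obtain ⟨x, hx⟩ := hitin fun n => decide (ψ n = 1)
  obtain ⟨y, hy⟩ := hitin fun n => !decide (ψ n = 1)
  refine ⟨x, y, fun n => ?_⟩
  rcases hψ n with h | h
  · have h' : ψ n ≠ 1 := by norm_num [h]
    have hlt := lt_of_mem_tentBranch hμ (by simpa [h'] using hx n) (by simpa [h'] using hy n)
    exact ⟨hlt.ne, h ▸ sub_div_abs_sub_of_gt hlt⟩
  · have hlt := lt_of_mem_tentBranch hμ (by simpa [h] using hy n) (by simpa [h] using hx n)
    exact ⟨hlt.ne', h ▸ sub_div_abs_sub_of_lt hlt⟩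
end
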